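/- A permutation π of length n avoids all four patterns 1324, 1342, 1432 and 4132 if and only if either π avoids 132, or in every occurrence of the pattern 132 in π, the entry playing the role of 3 is the maximal element n. -/

import Mathlib

/-!
Each of 1324, 1342, 1432 and 4132 is a 132 together with an entry larger than its 3, placed
after, between the 3 and the 2, between the 1 and the 3, or before it. Conversely, a 132
occurrence whose 3 is exceeded by some entry yields one of the four patterns, according to where
that entry sits relative to the occurrence. So π avoids all four iff the 3 of every 132 is
exceeded by nothing, i.e. equals the maximum.
-/

def Contains {n k : ℕ} (τ : Equiv.Perm (Fin n)) (p : Fin k → ℕ) : Prop :=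
  ∃ f : Fin k → Fin n, StrictMono f ∧ ∀ a b, p a < p b ↔ τ (f a) < τ (f b)

def AvoidsPat {n k : ℕ} (τ : Equiv.Perm (Fin n)) (p : Fin k → ℕ) : Prop := ¬ Contains τ p

lemma Equiv.Perm.exists_apply_gt_iff {n : ℕ} (π : Equiv.Perm (Fin n)) (x : Fin n) :
    (∃ l, x < π l) ↔ (x : ℕ) + 1 ≠ n := by
  refine ⟨fun ⟨l, hl⟩ => ?_, fun hx => ⟨π.symm ⟨x + 1, by omega⟩, ?_⟩⟩
  · have := (π l).is_lt
    rw [Fin.lt_def] at hl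
    omega
  · rw [Equiv.apply_symm_apply, Fin.lt_def]
    exact Nat.lt_succ_self _

section Patterns

variable {n : ℕ} (π : Equiv.Perm (Fin n))

def IsOcc132 (j i k : Fin n) : Prop :=
  j < i ∧ i < k ∧ π j < π k ∧ π k < π i

variable {π}

lemma contains_of_strictMono {m : ℕ} {p : Fin m → ℕ} (hp : Function.Injective p)
    {f : Fin m → Fin n} (hf : StrictMono f) (h : ∀ a b, p a < p b → π (f a) < π (f b)) :
    Contains π p := by
  refine ⟨f, hf, fun a b => ⟨h a b, fun hlt => ?_⟩⟩
  rcases lt_trichotomy (p a) (p b) with hab | hab | hab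
  · exact hab
  · exact absurd hlt (by rw [hp hab]; exact lt_irrefl _)
  · exact absurd (h b a hab) hlt.asymm

lemma contains_of_lt_of_lt_of_lt {p : Fin 4 → ℕ} (hp : Function.Injective p)
    {a b c d : Fin n} (hab : a < b) (hbc : b < c) (hcd : c < d)
    (h : ∀ x y, p x < p y → π (![a, b, c, d] x) < π (![a, b, c, d] y)) : Contains π p :=
  contains_of_strictMono hp
    (by simp [Fin.strictMono_iff_lt_succ, Fin.forall_fin_succ, hab, hbc, hcd]) h

lemma IsOcc132.contains {j i k : Fin n} (h : IsOcc132 π j i k) : Contains π ![1, 3, 2] := by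
  obtain ⟨hji, hik, h1, h2⟩ := h
  refine contains_of_strictMono (f := ![j, i, k]) (by decide)
    (by simp [Fin.strictMono_iff_lt_succ, Fin.forall_fin_succ, hji, hik]) ?_
  intro x y
  fin_cases x <;> fin_cases y <;> simp <;> order

lemma Contains.exists_isOcc132_lt {m : ℕ} {p : Fin m → ℕ} (h : Contains π p) (a b c d : Fin m)
    (hab : a < b) (hbc : b < c) (hac : p a < p c) (hcb : p c < p b) (hbd : p b < p d) :
    ∃ j i k l, IsOcc132 π j i k ∧ π i < π l := by
  obtain ⟨f, hf, hv⟩ := h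
  exact ⟨f a, f b, f c, f d,
    ⟨hf hab, hf hbc, (hv a c).1 hac, (hv c b).1 hcb⟩, (hv b d).1 hbd⟩

lemma IsOcc132.contains_four {j i k l : Fin n} (h : IsOcc132 π j i k) (hl : π i < π l) :
    Contains π ![1, 3, 2, 4] ∨ Contains π ![1, 3, 4, 2] ∨
      Contains π ![1, 4, 3, 2] ∨ Contains π ![4, 1, 3, 2] := by
  obtain ⟨hji, hik, h1, h2⟩ := h
  have hlj : l ≠ j := by rintro rfl; order
  have hli : l ≠ i := by rintro rfl; order
  have hlk : l ≠ k := by rintro rfl; order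
  rcases lt_or_gt_of_ne hlj with hlj | hjl
  · refine .inr <| .inr <| .inr <| contains_of_lt_of_lt_of_lt (by decide) hlj hji hik ?_
    intro x y; fin_cases x <;> fin_cases y <;> simp <;> order
  rcases lt_or_gt_of_ne hli with hli | hil
  · refine .inr <| .inr <| .inl <| contains_of_lt_of_lt_of_lt (by decide) hjl hli hik ?_
    intro x y; fin_cases x <;> fin_cases y <;> simp <;> order
  rcases lt_or_gt_of_ne hlk with hlk | hkl
  · refine .inr <| .inl <| contains_of_lt_of_lt_of_lt (by decide) hji hil hlk ?_
    intro x y; fin_cases x <;> fin_cases y <;> simp <;> order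
  · refine .inl <| contains_of_lt_of_lt_of_lt (by decide) hji hik hkl ?_
    intro x y; fin_cases x <;> fin_cases y <;> simp <;> order

lemma contains_four_iff :
    (Contains π ![1, 3, 2, 4] ∨ Contains π ![1, 3, 4, 2] ∨
      Contains π ![1, 4, 3, 2] ∨ Contains π ![4, 1, 3, 2]) ↔
      ∃ j i k l, IsOcc132 π j i k ∧ π i < π l := by
  refine ⟨fun h => ?_, fun ⟨j, i, k, l, h, hl⟩ => h.contains_four hl⟩
  rcases h with h | h | h | h
  · refine h.exists_isOcc132_lt 0 1 2 3 ?_ ?_ ?_ ?_ ?_ <;> decide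
  · refine h.exists_isOcc132_lt 0 1 3 2 ?_ ?_ ?_ ?_ ?_ <;> decide
  · refine h.exists_isOcc132_lt 0 2 3 1 ?_ ?_ ?_ ?_ ?_ <;> decide
  · refine h.exists_isOcc132_lt 1 2 3 0 ?_ ?_ ?_ ?_ ?_ <;> decide

end Patterns

theorem stmt16 (n : ℕ) (π : Equiv.Perm (Fin n)) :
    (AvoidsPat π ![1,3,2,4] ∧ AvoidsPat π ![1,3,4,2] ∧
     AvoidsPat π ![1,4,3,2] ∧ AvoidsPat π ![4,1,3,2]) ↔
    (AvoidsPat π ![1,3,2] ∨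
      ∀ j i k : Fin n, j < i → i < k → π j < π k → π k < π i →
        (π i : ℕ) + 1 = n) := by
  simp only [AvoidsPat, ← not_or, contains_four_iff, not_exists, not_and]
  constructor
  · intro h
    refine .inr fun j i k hji hik h1 h2 => not_not.1 fun hne => ?_
    obtain ⟨l, hl⟩ := (π.exists_apply_gt_iff (π i)).2 hne
    exact h j i k l ⟨hji, hik, h1, h2⟩ hl
  · rintro (h | h) j i k l hocc hl
    · exact h hocc.contains
    · obtain ⟨hji, hik, h1, h2⟩ := hocc
      exact (π.exists_apply_gt_iff (π i)).1 ⟨l, hl⟩ (h j i k hji hik h1 h2)
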